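/- Assume n ≥ 1/c > 2/p_0. For any pure Nash equilibrium x of a position-optimization game, the KL divergence of the empirical distribution P̂ (where P̂(x) = k(x)/n, the fraction of players at x) from P satisfies D_KL(P̂ ‖ P) ≤ log((⌊cn⌋+1)/⌊cn⌋). -/
import Mathlib


open Finset
open scoped ENNReal Classical

noncomputable def closestSet {X Y : Type*} {n : ℕ} (d : X → Y → ℝ≥0∞) (xs : Fin n → X)
    (y : Y) : Finset (Fin n) :=
  Finset.univ.filter fun i => ∀ j, d (xs i) y ≤ d (xs j) y

/-- Player `i`'s share of target `y`: `1/|X_min|` if `i` is among the closest players, else 0. -/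
noncomputable def share {X Y : Type*} {n : ℕ} (d : X → Y → ℝ≥0∞) (xs : Fin n → X) (y : Y)
    (i : Fin n) : ℝ :=
  if i ∈ closestSet d xs y then ((closestSet d xs y).card : ℝ)⁻¹ else 0

/-- Player `i`'s expected utility `E_{y∼Q}[π_i]`. -/
noncomputable def utility {X Y : Type*} [Fintype Y] {n : ℕ} (d : X → Y → ℝ≥0∞) (Q : Y → ℝ)
    (xs : Fin n → X) (i : Fin n) : ℝ :=
  ∑ y, Q y * share d xs y i

/-- Pure Nash equilibrium: no unilateral pure deviation strictly improves utility. -/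
def IsPureNash {X Y : Type*} [Fintype Y] {n : ℕ} (d : X → Y → ℝ≥0∞) (Q : Y → ℝ)
    (xs : Fin n → X) : Prop :=
  ∀ (i : Fin n) (x' : X), utility d Q (Function.update xs i x') i ≤ utility d Q xs i

/-- The projection `P` of `Q` onto pseudo-targets: `P x = Q({y : x*(y) = x})`. -/
noncomputable def projP {X Y : Type*} [Fintype Y] (Q : Y → ℝ) (xstar : Y → X) (x : X) : ℝ :=
  ∑ y ∈ Finset.univ.filter (fun y => xstar y = x), Q y

/-- Number of players playing position `x`. -/
noncomputable def kcount {X : Type*} {n : ℕ} (xs : Fin n → X) (x : X) : ℕ :=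
  (Finset.univ.filter (fun i => xs i = x)).card


section Aux
set_option linter.unusedSectionVars false

variable {X Y : Type*} [Fintype Y] {n : ℕ}

lemma closestSet_nonempty (d : X → Y → ℝ≥0∞) (xs : Fin n → X) (y : Y) (hn : 0 < n) :
    (closestSet d xs y).Nonempty := by
  have : Nonempty (Fin n) := Fin.pos_iff_nonempty.mp hn
  obtain ⟨i, -, hi⟩ := Finset.exists_min_image Finset.univ (fun i => d (xs i) y)
    Finset.univ_nonempty
  refine ⟨i, ?_⟩
  simp only [closestSet, Finset.mem_filter, Finset.mem_univ, true_and]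
  exact fun j => hi j (Finset.mem_univ j)

lemma share_nonneg (d : X → Y → ℝ≥0∞) (xs : Fin n → X) (y : Y) (i : Fin n) :
    0 ≤ share d xs y i := by
  unfold share; split <;> positivity

lemma sum_share (d : X → Y → ℝ≥0∞) (xs : Fin n → X) (y : Y) (hn : 0 < n) :
    ∑ i, share d xs y i = 1 := by
  obtain ⟨i0, hi0⟩ := closestSet_nonempty d xs y hn
  have hc : (closestSet d xs y).card ≠ 0 := Finset.card_ne_zero_of_mem hi0
  have : ∑ i, share d xs y i
      = ∑ i ∈ Finset.univ ∩ closestSet d xs y, ((closestSet d xs y).card : ℝ)⁻¹ := by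
    rw [← Finset.sum_ite_mem]; rfl
  rw [this, Finset.univ_inter, Finset.sum_const, nsmul_eq_mul,
    mul_inv_cancel₀ (by exact_mod_cast hc)]

lemma sum_utility (d : X → Y → ℝ≥0∞) (Q : Y → ℝ) (hQsum : ∑ y, Q y = 1)
    (xs : Fin n → X) (hn : 0 < n) : ∑ i, utility d Q xs i = 1 := by
  unfold utility
  rw [Finset.sum_comm]
  calc ∑ y, ∑ i, Q y * share d xs y i
      = ∑ y, Q y * ∑ i, share d xs y i := by
        refine Finset.sum_congr rfl fun y _ => ?_; rw [Finset.mul_sum]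
    _ = ∑ y, Q y := by
        refine Finset.sum_congr rfl fun y _ => ?_; rw [sum_share d xs y hn, mul_one]
    _ = 1 := hQsum

lemma closestSet_eq (d : X → Y → ℝ≥0∞) (Q : Y → ℝ) (xstar : Y → X)
    (hmin : ∀ y x', d (xstar y) y ≤ d x' y)
    (huniq : ∀ y, Q y ≠ 0 → ∀ x', d x' y ≤ d (xstar y) y → x' = xstar y)
    (zs : Fin n → X) (y : Y) (hQy : Q y ≠ 0) (hocc : ∃ j, zs j = xstar y) :
    closestSet d zs y = Finset.univ.filter (fun j => zs j = xstar y) := by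
  obtain ⟨j0, hj0⟩ := hocc
  ext j
  simp only [closestSet, Finset.mem_filter, Finset.mem_univ, true_and]
  constructor
  · intro h
    refine huniq y hQy _ ?_
    calc d (zs j) y ≤ d (zs j0) y := h j0
      _ = d (xstar y) y := by rw [hj0]
  · intro h j'
    rw [h]; exact hmin y _

lemma share_eq (d : X → Y → ℝ≥0∞) (Q : Y → ℝ) (xstar : Y → X)
    (hmin : ∀ y x', d (xstar y) y ≤ d x' y)
    (huniq : ∀ y, Q y ≠ 0 → ∀ x', d x' y ≤ d (xstar y) y → x' = xstar y)
    (zs : Fin n → X) (y : Y) (i : Fin n) (hQy : Q y ≠ 0) (hocc : ∃ j, zs j = xstar y) :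
    share d zs y i = if zs i = xstar y then ((kcount zs (xstar y) : ℝ))⁻¹ else 0 := by
  have hcs := closestSet_eq d Q xstar hmin huniq zs y hQy hocc
  rw [share, hcs]
  simp only [Finset.mem_filter, Finset.mem_univ, true_and]
  rfl

lemma utility_ge (d : X → Y → ℝ≥0∞) (Q : Y → ℝ) (hQ : ∀ y, 0 ≤ Q y) (xstar : Y → X)
    (hmin : ∀ y x', d (xstar y) y ≤ d x' y)
    (huniq : ∀ y, Q y ≠ 0 → ∀ x', d x' y ≤ d (xstar y) y → x' = xstar y)
    (zs : Fin n → X) (i : Fin n) :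
    projP Q xstar (zs i) / (kcount zs (zs i) : ℝ) ≤ utility d Q zs i := by
  have key : ∀ y ∈ Finset.univ.filter (fun y => xstar y = zs i),
      Q y / (kcount zs (zs i) : ℝ) ≤ Q y * share d zs y i := by
    intro y hy
    rw [Finset.mem_filter] at hy
    rcases eq_or_ne (Q y) 0 with h0 | h0
    · simp [h0]
    · rw [share_eq d Q xstar hmin huniq zs y i h0 ⟨i, hy.2.symm⟩, if_pos hy.2.symm,
        hy.2, div_eq_mul_inv]
  calc projP Q xstar (zs i) / (kcount zs (zs i) : ℝ)
      = ∑ y ∈ Finset.univ.filter (fun y => xstar y = zs i),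
          Q y / (kcount zs (zs i) : ℝ) := by rw [projP, Finset.sum_div]
    _ ≤ ∑ y ∈ Finset.univ.filter (fun y => xstar y = zs i), Q y * share d zs y i :=
        Finset.sum_le_sum key
    _ ≤ ∑ y, Q y * share d zs y i :=
        Finset.sum_le_sum_of_subset_of_nonneg (Finset.filter_subset _ _)
          (fun y _ _ => mul_nonneg (hQ y) (share_nonneg d zs y i))
    _ = utility d Q zs i := rfl

lemma utility_eq (d : X → Y → ℝ≥0∞) (Q : Y → ℝ) (xstar : Y → X)
    (hmin : ∀ y x', d (xstar y) y ≤ d x' y)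
    (huniq : ∀ y, Q y ≠ 0 → ∀ x', d x' y ≤ d (xstar y) y → x' = xstar y)
    (zs : Fin n → X) (i : Fin n) (hocc : ∀ y, Q y ≠ 0 → ∃ j, zs j = xstar y) :
    utility d Q zs i = projP Q xstar (zs i) / (kcount zs (zs i) : ℝ) := by
  rw [utility, projP, Finset.sum_div,
    ← Finset.sum_filter_add_sum_filter_not Finset.univ (fun y => xstar y = zs i)
      (fun y => Q y * share d zs y i)]
  have h2 : ∑ y ∈ Finset.univ.filter (fun y => ¬ xstar y = zs i),
      Q y * share d zs y i = 0 := by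
    refine Finset.sum_eq_zero fun y hy => ?_
    rw [Finset.mem_filter] at hy
    rcases eq_or_ne (Q y) 0 with h0 | h0
    · rw [h0, zero_mul]
    · rw [share_eq d Q xstar hmin huniq zs y i h0 (hocc y h0),
        if_neg (fun h => hy.2 h.symm), mul_zero]
  rw [h2, add_zero]
  refine Finset.sum_congr rfl fun y hy => ?_
  rw [Finset.mem_filter] at hy
  rcases eq_or_ne (Q y) 0 with h0 | h0
  · rw [h0, zero_mul, zero_div]
  · rw [share_eq d Q xstar hmin huniq zs y i h0 ⟨i, hy.2.symm⟩, if_pos hy.2.symm,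
      hy.2, div_eq_mul_inv]

lemma kcount_update_ne (zs : Fin n → X) (i : Fin n) (x : X) (h : zs i ≠ x) :
    kcount (Function.update zs i x) x = kcount zs x + 1 := by
  have hset : Finset.univ.filter (fun j => Function.update zs i x j = x)
      = insert i (Finset.univ.filter (fun j => zs j = x)) := by
    ext j
    simp only [Finset.mem_filter, Finset.mem_univ, true_and, Finset.mem_insert]
    rcases eq_or_ne j i with rfl | hj
    · simp [Function.update_self]
    · simp [Function.update_of_ne hj, hj]
  rw [kcount, hset, Finset.card_insert_of_notMem (by
    simp only [Finset.mem_filter, Finset.mem_univ, true_and]; exact h), kcount]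

end Aux

/-- KL divergence of the empirical distribution from `P` is at most
`log((⌊cn⌋+1)/⌊cn⌋)` in any pure Nash equilibrium, when `n ≥ 1/c > 2/p₀`. -/
theorem pure_nash_kl_bound {X Y : Type*} [Fintype Y] {n : ℕ}
    (d : X → Y → ℝ≥0∞) (Q : Y → ℝ) (hQ : ∀ y, 0 ≤ Q y) (hQsum : ∑ y, Q y = 1)
    (xstar : Y → X)
    (hmin : ∀ y x', d (xstar y) y ≤ d x' y)
    (huniq : ∀ y, Q y ≠ 0 → ∀ x', d x' y ≤ d (xstar y) y → x' = xstar y)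
    (p0 : ℝ) (hp0pos : 0 < p0)
    (hp0le : ∀ y, p0 ≤ projP Q xstar (xstar y))
    (hp0mem : ∃ y, projP Q xstar (xstar y) = p0)
    (c : ℝ) (hc : 2 / p0 < 1 / c) (hcn : 1 / c ≤ n) (hcpos : 0 < c)
    (xs : Fin n → X) (hnash : IsPureNash d Q xs) :
    ∑ x ∈ Finset.univ.image xstar,
        ((kcount xs x : ℝ) / n) *
          Real.log (((kcount xs x : ℝ) / n) / projP Q xstar x) ≤
      Real.log (((⌊c * n⌋₊ : ℝ) + 1) / ⌊c * n⌋₊) := by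
  classical
  have hc2 : 0 < (1:ℝ)/c := lt_trans (by positivity) hc
  have hnpos : 0 < (n:ℝ) := lt_of_lt_of_le hc2 hcn
  have hn : 0 < n := by exact_mod_cast hnpos
  set m := ⌊c * n⌋₊ with hm
  have hcn1 : (1:ℝ) ≤ c * n := by
    rw [div_le_iff₀ hcpos] at hcn; linarith
  have hm1 : 1 ≤ m := Nat.le_floor (by exact_mod_cast hcn1)
  have hmR : (1:ℝ) ≤ (m:ℝ) := by exact_mod_cast hm1
  have hmpos : (0:ℝ) < (m:ℝ) := by linarith
  have hmle : (m:ℝ) ≤ c * n := Nat.floor_le (by positivity)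
  have hcp0 : 2 * c < p0 := by
    rw [div_lt_div_iff₀ hp0pos hcpos] at hc; linarith
  obtain ⟨y0, -⟩ := hp0mem
  have himg : (Finset.univ.image xstar).Nonempty :=
    ⟨xstar y0, Finset.mem_image_of_mem _ (Finset.mem_univ y0)⟩
  have hProjNonneg : ∀ x, 0 ≤ projP Q xstar x := fun x => Finset.sum_nonneg fun y _ => hQ y
  have hProjImg : ∀ x ∈ Finset.univ.image xstar, p0 ≤ projP Q xstar x := by
    intro x hx; obtain ⟨y, -, rfl⟩ := Finset.mem_image.mp hx; exact hp0le y
  have hProjSum : ∑ x ∈ Finset.univ.image xstar, projP Q xstar x = 1 := by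
    rw [← hQsum]
    exact Finset.sum_fiberwise_of_maps_to
      (fun y _ => Finset.mem_image_of_mem _ (Finset.mem_univ y)) Q
  have hNE : Nonempty (Fin n) := Fin.pos_iff_nonempty.mp hn
  -- some player has utility at most 1/n
  obtain ⟨i0, -, hi0⟩ := Finset.exists_le_of_sum_le (Finset.univ_nonempty (α := Fin n))
    (show ∑ i : Fin n, utility d Q xs i ≤ ∑ _i : Fin n, (1:ℝ)/n by
      rw [sum_utility d Q hQsum xs hn, Finset.sum_const, Finset.card_univ, Fintype.card_fin,
        nsmul_eq_mul, mul_one_div, div_self (ne_of_gt hnpos)])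
  have h1nc : (1:ℝ)/n ≤ c := by rw [div_le_iff₀ hnpos]; linarith
  -- every pseudo-target is occupied
  have hocc : ∀ y : Y, ∃ j, xs j = xstar y := by
    intro y
    by_contra h
    push_neg at h
    set zs := Function.update xs i0 (xstar y) with hzs
    have hzi : zs i0 = xstar y := Function.update_self _ _ _
    have hk0 : kcount xs (xstar y) = 0 := by
      rw [kcount, Finset.card_eq_zero, Finset.filter_eq_empty_iff]
      exact fun j _ => h j
    have hk : kcount zs (xstar y) = 1 := by
      rw [hzs, kcount_update_ne xs i0 (xstar y) (h i0), hk0]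
    have hge := utility_ge d Q hQ xstar hmin huniq zs i0
    rw [hzi, hk] at hge
    have hnash' := hnash i0 (xstar y)
    rw [← hzs] at hnash'
    have := hp0le y
    simp only [Nat.cast_one, div_one] at hge
    linarith
  -- equilibrium utility formula
  have hutil : ∀ i, utility d Q xs i = projP Q xstar (xs i) / (kcount xs (xs i) : ℝ) :=
    fun i => utility_eq d Q xstar hmin huniq xs i (fun y _ => hocc y)
  -- sum of counts over image is at most n
  have hsumkN : ∑ x ∈ Finset.univ.image xstar, kcount xs x ≤ n := by
    have hswap : ∑ x ∈ Finset.univ.image xstar, kcount xs x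
        = ∑ i : Fin n, ∑ x ∈ Finset.univ.image xstar, if xs i = x then 1 else 0 := by
      simp_rw [kcount, Finset.card_filter]
      rw [Finset.sum_comm]
    rw [hswap]
    calc ∑ i : Fin n, (∑ x ∈ Finset.univ.image xstar, if xs i = x then 1 else 0)
        ≤ ∑ _i : Fin n, 1 := by
          refine Finset.sum_le_sum fun i _ => ?_
          rw [Finset.sum_ite_eq]
          split <;> simp
      _ = n := by simp
  have hsumk : ∑ x ∈ Finset.univ.image xstar, (kcount xs x : ℝ) ≤ n := by
    exact_mod_cast hsumkN
  -- pick a position with count at most its expectation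
  obtain ⟨x1, hx1mem, hx1⟩ := Finset.exists_le_of_sum_le himg
    (show ∑ x ∈ Finset.univ.image xstar, (kcount xs x : ℝ)
        ≤ ∑ x ∈ Finset.univ.image xstar, (n : ℝ) * projP Q xstar x by
      rw [← Finset.mul_sum, hProjSum, mul_one]; exact hsumk)
  have hA : p0 ≤ projP Q xstar x1 := hProjImg x1 hx1mem
  have hApos : 0 < projP Q xstar x1 := lt_of_lt_of_le hp0pos hA
  -- key upper bound on counts
  have hkey : ∀ x ∈ Finset.univ.image xstar,
      (kcount xs x : ℝ) ≤ projP Q xstar x * ((n:ℝ) + 1/p0) := by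
    intro x hx
    set A := projP Q xstar x1 with hAdef
    set B := projP Q xstar x with hBdef
    have hB : p0 ≤ B := hProjImg x hx
    have hBpos : 0 < B := lt_of_lt_of_le hp0pos hB
    rcases Nat.eq_zero_or_pos (kcount xs x) with h0 | hpos
    · rw [h0, Nat.cast_zero]
      have h1p : (0:ℝ) < 1/p0 := by positivity
      exact mul_nonneg (le_of_lt hBpos) (by linarith)
    obtain ⟨i, hi⟩ : ∃ i, xs i = x := by
      obtain ⟨i, hi⟩ := Finset.card_pos.mp hpos
      exact ⟨i, (Finset.mem_filter.mp hi).2⟩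
    have hkpos : (0:ℝ) < (kcount xs x : ℝ) := by exact_mod_cast hpos
    have hui : utility d Q xs i = B / (kcount xs x : ℝ) := by rw [hutil i, hi]
    have hdev : A / ((n:ℝ) * A + 1) ≤ B / (kcount xs x : ℝ) := by
      rcases eq_or_ne (xs i) x1 with he | hne
      · -- x = x1; count at x1 is at most n*A
        have hxx1 : x = x1 := by rw [← hi, he]
        have hkA : (kcount xs x : ℝ) ≤ (n:ℝ) * A := by rw [hxx1]; exact hx1
        have : (kcount xs x : ℝ) ≤ (n:ℝ) * A + 1 := by linarith
        calc A / ((n:ℝ) * A + 1) ≤ A / (kcount xs x : ℝ) :=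
              div_le_div_of_nonneg_left (le_of_lt hApos) hkpos this
          _ = B / (kcount xs x : ℝ) := by rw [hBdef, hxx1]
      · set zs := Function.update xs i x1 with hzs
        have hzi : zs i = x1 := Function.update_self _ _ _
        have hk' : kcount zs x1 = kcount xs x1 + 1 := by
          rw [hzs]; exact kcount_update_ne xs i x1 hne
        have hge := utility_ge d Q hQ xstar hmin huniq zs i
        rw [hzi, hk'] at hge
        have hnash' := hnash i x1
        rw [← hzs] at hnash'
        have hstep : A / ((n:ℝ) * A + 1) ≤ A / ((kcount xs x1 : ℝ) + 1) := by
          refine div_le_div_of_nonneg_left (le_of_lt hApos) (by positivity) ?_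
          linarith [hx1]
        have hcast : ((kcount xs x1 + 1 : ℕ) : ℝ) = (kcount xs x1 : ℝ) + 1 := by push_cast; ring
        rw [hcast] at hge
        calc A / ((n:ℝ) * A + 1) ≤ A / ((kcount xs x1 : ℝ) + 1) := hstep
          _ ≤ utility d Q zs i := hge
          _ ≤ utility d Q xs i := hnash'
          _ = B / (kcount xs x : ℝ) := hui
    -- algebra: from A/(nA+1) ≤ B/k derive k ≤ B(n + 1/p0)
    have hmul : A * (kcount xs x : ℝ) ≤ B * ((n:ℝ) * A + 1) :=
      (div_le_div_iff₀ (by positivity) hkpos).mp hdev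
    have hBA : B ≤ B / p0 * A := by
      rw [div_mul_eq_mul_div, le_div_iff₀ hp0pos]
      exact mul_le_mul_of_nonneg_left hA (le_of_lt hBpos)
    have : (kcount xs x : ℝ) * A ≤ (B * (n:ℝ) + B / p0) * A := by
      calc (kcount xs x : ℝ) * A = A * (kcount xs x : ℝ) := by ring
        _ ≤ B * ((n:ℝ) * A + 1) := hmul
        _ = B * (n:ℝ) * A + B := by ring
        _ ≤ B * (n:ℝ) * A + B / p0 * A := by linarith
        _ = (B * (n:ℝ) + B / p0) * A := by ring
    have := le_of_mul_le_mul_right this hApos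
    calc (kcount xs x : ℝ) ≤ B * (n:ℝ) + B / p0 := this
      _ = B * ((n:ℝ) + 1/p0) := by ring
  -- ratio bound
  have hmnp : (m:ℝ) ≤ (n:ℝ) * p0 := by nlinarith
  have hratio : ∀ x ∈ Finset.univ.image xstar,
      ((kcount xs x : ℝ) / n) / projP Q xstar x ≤ ((m:ℝ) + 1) / m := by
    intro x hx
    set B := projP Q xstar x with hBdef
    have hB : p0 ≤ B := hProjImg x hx
    have hBpos : 0 < B := lt_of_lt_of_le hp0pos hB
    have hk := hkey x hx
    rw [div_div, div_le_div_iff₀ (by positivity) hmpos]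
    have h2 : B / p0 * (m:ℝ) ≤ B * n := by
      have hmp : (m:ℝ)/p0 ≤ (n:ℝ) := (div_le_iff₀ hp0pos).mpr hmnp
      calc B / p0 * (m:ℝ) = B * ((m:ℝ)/p0) := by ring
        _ ≤ B * n := mul_le_mul_of_nonneg_left hmp (le_of_lt hBpos)
    calc (kcount xs x : ℝ) * (m:ℝ) ≤ B * ((n:ℝ) + 1/p0) * (m:ℝ) :=
          mul_le_mul_of_nonneg_right hk (le_of_lt hmpos)
      _ = B * (n:ℝ) * (m:ℝ) + B / p0 * (m:ℝ) := by ring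
      _ ≤ B * (n:ℝ) * (m:ℝ) + B * (n:ℝ) := by linarith
      _ = ((m:ℝ) + 1) * ((n:ℝ) * B) := by ring
  have hr1 : (1:ℝ) ≤ ((m:ℝ) + 1) / m := by
    rw [le_div_iff₀ hmpos]; linarith
  have hL : 0 ≤ Real.log (((m:ℝ) + 1) / m) := Real.log_nonneg hr1
  have hsum1 : ∑ x ∈ Finset.univ.image xstar, (kcount xs x : ℝ) / n ≤ 1 := by
    rw [← Finset.sum_div, div_le_one hnpos]; exact hsumk
  calc ∑ x ∈ Finset.univ.image xstar,
        ((kcount xs x : ℝ) / n) * Real.log (((kcount xs x : ℝ) / n) / projP Q xstar x)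
      ≤ ∑ x ∈ Finset.univ.image xstar,
          ((kcount xs x : ℝ) / n) * Real.log (((m:ℝ) + 1) / m) := by
        refine Finset.sum_le_sum fun x hx => ?_
        rcases Nat.eq_zero_or_pos (kcount xs x) with h0 | hpos
        · simp [h0]
        · have hkpos : (0:ℝ) < (kcount xs x : ℝ) / n := by
            have : (0:ℝ) < (kcount xs x : ℝ) := by exact_mod_cast hpos
            positivity
          have hBpos : 0 < projP Q xstar x := lt_of_lt_of_le hp0pos (hProjImg x hx)
          refine mul_le_mul_of_nonneg_left ?_ (le_of_lt hkpos)
          exact Real.log_le_log (by positivity) (hratio x hx)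
    _ = (∑ x ∈ Finset.univ.image xstar, (kcount xs x : ℝ) / n)
          * Real.log (((m:ℝ) + 1) / m) := by rw [Finset.sum_mul]
    _ ≤ 1 * Real.log (((m:ℝ) + 1) / m) := mul_le_mul_of_nonneg_right hsum1 hL
    _ = Real.log (((m:ℝ) + 1) / m) := one_mul _
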